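/- For every integer n ≥ 10, setting m = ⌊(π/√2)√n⌋, one has cos(3π/m) − cos(4π/m) > 4/n; that is, the gap x_4^{CL} − x_3^{CL} between the fourth and fifth Chebyshev–Lobatto nodes exceeds twice the equispaced grid spacing 2/n. -/

import Mathlib

/-!
With `a = π / (2m)` the gap is `cos 6a - cos 8a = 2 sin 7a sin a`, and `m ≤ π √(n/2)` gives
`4/n ≤ 8a²`, so it suffices that `sin 7a sin a > 4a²`. Since `m ≥ 7` we have `7a ≤ π/2`, and
Jordan's inequality `sin 7a ≥ 14a/π` together with `sin a > a - a³/6` gives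
`sin 7a sin a ≥ (14/π) a² (1 - a²/6) > 4a²`, as `a² ≤ (π/14)² < 0.6`.
-/

open Real

lemma cos_six_mul_sub_cos_eight_mul (a : ℝ) :
    cos (6 * a) - cos (8 * a) = 2 * sin (7 * a) * sin a := by
  rw [cos_sub_cos, show (6 * a + 8 * a) / 2 = 7 * a by ring,
    show (6 * a - 8 * a) / 2 = -a by ring, sin_neg]
  ring

lemma four_mul_sq_lt_sin_seven_mul_mul_sin {a : ℝ} (ha : 0 < a) (ha' : a ≤ π / 14) :
    4 * a ^ 2 < sin (7 * a) * sin a := by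
  have hpi : 3.14 < π := pi_gt_d2
  have hpi' : π < 3.15 := pi_lt_d2
  have hjordan : 2 / π * (7 * a) ≤ sin (7 * a) := mul_le_sin (by positivity) (by linarith)
  have hsin : a - a ^ 3 / 6 < sin a := sin_gt_sub_cube ha
  have hcube_pos : 0 < a - a ^ 3 / 6 := by nlinarith [mul_pos ha ha]
  have hproduct : 4 * a ^ 2 < 2 / π * (7 * a) * (a - a ^ 3 / 6) := by
    have ha_sq : a ^ 2 < 0.06 := by nlinarith
    rw [div_mul_eq_mul_div, div_mul_eq_mul_div, lt_div_iff₀ pi_pos]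
    nlinarith [mul_pos (pow_pos ha 2) (by linarith : (0 : ℝ) < 14 - 14 * a ^ 2 / 6 - 4 * π)]
  calc 4 * a ^ 2 < 2 / π * (7 * a) * (a - a ^ 3 / 6) := hproduct
    _ ≤ sin (7 * a) * sin a :=
      mul_le_mul hjordan hsin.le hcube_pos.le ((by positivity : (0 : ℝ) ≤ _).trans hjordan)

lemma pi_div_sqrt_two_mul_sqrt (x : ℝ) : π / √2 * √x = √(π ^ 2 * x / 2) := by
  rw [sqrt_div' _ (by norm_num : (0 : ℝ) ≤ 2), sqrt_mul (sq_nonneg π), sqrt_sq pi_pos.le]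
  ring

lemma sq_floor_sqrt_le {y : ℝ} (hy : 0 ≤ y) : (⌊√y⌋₊ : ℝ) ^ 2 ≤ y := by
  calc (⌊√y⌋₊ : ℝ) ^ 2 ≤ √y ^ 2 := by
        gcongr; exact Nat.floor_le (sqrt_nonneg y)
    _ = y := sq_sqrt hy

lemma seven_le_floor_sqrt_pi_sq_mul_div_two {n : ℕ} (hn : 10 ≤ n) :
    7 ≤ ⌊√(π ^ 2 * n / 2)⌋₊ := by
  have hpi : 3.14 < π := pi_gt_d2
  have hn' : (10 : ℝ) ≤ n := by exact_mod_cast hn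
  refine Nat.le_floor (le_sqrt_of_sq_le ?_)
  nlinarith

/-- For every `n ≥ 10`, with `m = ⌊(π/√2)√n⌋`, one has
`cos(3π/m) − cos(4π/m) > 4/n`, i.e. the gap `x_4^{CL} − x_3^{CL}` between the
fourth and fifth Chebyshev–Lobatto nodes exceeds twice the grid spacing `2/n`. -/
theorem chebyshev_gap_exceeds_twice_spacing
    (n : ℕ) (hn : 10 ≤ n) (m : ℕ)
    (hm : m = ⌊Real.pi / Real.sqrt 2 * Real.sqrt n⌋₊) :
    Real.cos (3 * Real.pi / m) - Real.cos (4 * Real.pi / m) > 4 / (n : ℝ) := by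
  rw [pi_div_sqrt_two_mul_sqrt] at hm
  have hm7 : (7 : ℝ) ≤ m := by exact_mod_cast hm ▸ seven_le_floor_sqrt_pi_sq_mul_div_two hn
  have hm_sq : (m : ℝ) ^ 2 ≤ π ^ 2 * n / 2 := hm ▸ sq_floor_sqrt_le (by positivity)
  have hn_pos : (0 : ℝ) < n := by positivity
  set a := π / (2 * m) with ha
  have ha_pos : 0 < a := by positivity
  have ha_le : a ≤ π / 14 := by
    rw [ha, div_le_div_iff₀ (by positivity) (by norm_num)]; nlinarith [pi_pos]
  have hspacing : 4 / (n : ℝ) ≤ 8 * a ^ 2 := by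
    rw [show 8 * a ^ 2 = 2 * π ^ 2 / m ^ 2 by rw [ha]; field_simp; ring,
      div_le_div_iff₀ hn_pos (by positivity)]
    nlinarith
  rw [show 3 * π / m = 6 * a by rw [ha]; field_simp; ring,
    show 4 * π / m = 8 * a by rw [ha]; field_simp; ring, cos_six_mul_sub_cos_eight_mul]
  linarith [four_mul_sq_lt_sin_seven_mul_mul_sin ha_pos ha_le]
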